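/- Let k be a field and C a k-coalgebra. Every element c ∈ C is contained in a finite-dimensional subcoalgebra of C: there exists a finite-dimensional linear subspace D ⊆ C with c ∈ D such that Δ(D) is contained in the image of D ⊗ D in C ⊗ C. -/

import Mathlib

open TensorProduct

universe u

namespace Sub18

variable {k : Type u} [Field k]
variable {C : Type u} [AddCommGroup C] [Module k C]

/-- Contract the left factor with a functional. -/
noncomputable def lc (φ : C →ₗ[k] k) (M : Type u) [AddCommGroup M] [Module k M] :
    C ⊗[k] M →ₗ[k] M :=
  (TensorProduct.lid k M).toLinearMap ∘ₗ φ.rTensor M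

@[simp] lemma lc_tmul (φ : C →ₗ[k] k) {M : Type u} [AddCommGroup M] [Module k M]
    (a : C) (m : M) : lc φ M (a ⊗ₜ m) = φ a • m := by
  simp [lc]

/-- Contract the right factor with a functional. -/
noncomputable def rc (ψ : C →ₗ[k] k) (M : Type u) [AddCommGroup M] [Module k M] :
    M ⊗[k] C →ₗ[k] M :=
  (TensorProduct.rid k M).toLinearMap ∘ₗ ψ.lTensor M

@[simp] lemma rc_tmul (ψ : C →ₗ[k] k) {M : Type u} [AddCommGroup M] [Module k M]
    (m : M) (a : C) : rc ψ M (m ⊗ₜ a) = ψ a • m := by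
  simp [rc]

lemma exists_retraction (D : Submodule k C) :
    ∃ r : C →ₗ[k] D, r ∘ₗ D.subtype = LinearMap.id := by
  obtain ⟨q, hq⟩ := D.exists_isCompl
  exact ⟨D.linearProjOfIsCompl q hq,
    LinearMap.ext fun x => Submodule.linearProjOfIsCompl_apply_left hq x⟩

lemma mem_range_map_of_mem {M M' N N' : Type u}
    [AddCommGroup M] [Module k M] [AddCommGroup M'] [Module k M']
    [AddCommGroup N] [Module k N] [AddCommGroup N'] [Module k N']
    (f : M →ₗ[k] M') (g : N →ₗ[k] N') (r : M' →ₗ[k] M)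
    (hr : r ∘ₗ f = LinearMap.id) {t : M' ⊗[k] N'}
    (h1 : t ∈ LinearMap.range (map f LinearMap.id))
    (h2 : t ∈ LinearMap.range (map LinearMap.id g)) :
    t ∈ LinearMap.range (map f g) := by
  obtain ⟨s, rfl⟩ := h2
  obtain ⟨w, hw⟩ := h1
  refine ⟨map r LinearMap.id s, ?_⟩
  have hf : (f ∘ₗ r) ∘ₗ f = f := by
    rw [LinearMap.comp_assoc, hr, LinearMap.comp_id]
  have h3 : map (f ∘ₗ r) LinearMap.id (map LinearMap.id g s) = map LinearMap.id g s := by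
    rw [← hw, ← LinearMap.comp_apply, ← TensorProduct.map_comp, hf, LinearMap.id_comp]
  calc map f g (map r LinearMap.id s)
      = map (f ∘ₗ r) (g ∘ₗ LinearMap.id) s := by
        rw [TensorProduct.map_comp, LinearMap.comp_apply]
    _ = map (f ∘ₗ r) LinearMap.id (map LinearMap.id g s) := by
        rw [← LinearMap.comp_apply, ← TensorProduct.map_comp]; simp
    _ = map LinearMap.id g s := h3

lemma lc_assoc_mem (φ : C →ₗ[k] k) (D : Submodule k C) (w : C ⊗[k] C) {d : C} (hd : d ∈ D) :
    lc φ (C ⊗[k] C) (TensorProduct.assoc k C C C (w ⊗ₜ d)) ∈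
      LinearMap.range (map (LinearMap.id (R := k) (M := C)) D.subtype) := by
  induction w with
  | zero => simp
  | tmul p q =>
      refine ⟨φ p • (q ⊗ₜ ⟨d, hd⟩), ?_⟩
      simp [assoc_tmul]
  | add v w hv hw =>
      rw [add_tmul, map_add, map_add]
      exact add_mem hv hw

lemma rc_assoc_symm_mem (ψ : C →ₗ[k] k) (D : Submodule k C) (w : C ⊗[k] C) {d : C}
    (hd : d ∈ D) :
    rc ψ (C ⊗[k] C) ((TensorProduct.assoc k C C C).symm (d ⊗ₜ w)) ∈
      LinearMap.range (map D.subtype (LinearMap.id (R := k) (M := C))) := by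
  induction w with
  | zero => simp
  | tmul p q =>
      refine ⟨ψ q • ((⟨d, hd⟩ : D) ⊗ₜ p), ?_⟩
      simp [assoc_symm_tmul]
  | add v w hv hw =>
      rw [tmul_add, map_add, map_add]
      exact add_mem hv hw

end Sub18

set_option maxHeartbeats 3200000 in
open Sub18 in
theorem exists_finiteDimensional_subcoalgebra_mem
    {k : Type u} [Field k]
    (C : Type u) [AddCommGroup C] [Module k C] [Coalgebra k C] (c : C) :
    ∃ D : Submodule k C, FiniteDimensional k D ∧ c ∈ D ∧
      ∀ x ∈ D, Coalgebra.comul (R := k) x ∈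
        LinearMap.range (TensorProduct.map D.subtype D.subtype) := by
  classical
  set Δ : C →ₗ[k] C ⊗[k] C := Coalgebra.comul (R := k) with hΔ
  -- coassociativity in convenient forms
  have hco : (TensorProduct.assoc k C C C).toLinearMap ∘ₗ Δ.rTensor C ∘ₗ Δ
      = Δ.lTensor C ∘ₗ Δ := Coalgebra.coassoc
  have hco_symm : (TensorProduct.assoc k C C C).symm.toLinearMap ∘ₗ Δ.lTensor C ∘ₗ Δ
      = Δ.rTensor C ∘ₗ Δ := Coalgebra.coassoc_symm
  -- finite-dimensional subspaces capturing `Δ c`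
  obtain ⟨X, Y, hXfin, hYfin, hXY⟩ :=
    TensorProduct.exists_finite_submodule_of_setFinite (R := k) {Δ c} (Set.finite_singleton _)
  haveI : Module.Finite k X := hXfin
  haveI : Module.Finite k Y := hYfin
  obtain ⟨s, hs⟩ := hXY (Set.mem_singleton _)
  rw [mapIncl] at hs
  set bX := Module.finBasis k X with hbX
  set bY := Module.finBasis k Y with hbY
  obtain ⟨rX, hrX⟩ := exists_retraction X
  obtain ⟨rY, hrY⟩ := exists_retraction Y
  set φ : Fin (Module.finrank k X) → (C →ₗ[k] k) := fun i => bX.coord i ∘ₗ rX with hφdef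
  set ψ : Fin (Module.finrank k Y) → (C →ₗ[k] k) := fun j => bY.coord j ∘ₗ rY with hψdef
  have hrXap : ∀ x : X, rX (x : C) = x := fun x => by
    simpa using LinearMap.congr_fun hrX x
  have hrYap : ∀ y : Y, rY (y : C) = y := fun y => by
    simpa using LinearMap.congr_fun hrY y
  have hφδ : ∀ i i', φ i ((bX i' : C)) = if i' = i then 1 else 0 := by
    intro i i'
    simp [hφdef, hrXap, Module.Basis.coord_apply, Finsupp.single_apply]
  have hψδ : ∀ j j', ψ j ((bY j' : C)) = if j' = j then 1 else 0 := by
    intro j j'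
    simp [hψdef, hrYap, Module.Basis.coord_apply, Finsupp.single_apply]
  have hXrec : ∀ x : X, ∑ i, φ i (X.subtype x) • X.subtype (bX i) = X.subtype x := by
    intro x
    have h1 : ∀ i, φ i (X.subtype x) = bX.repr x i := by
      intro i; simp [hφdef, hrXap, Module.Basis.coord_apply]
    calc ∑ i, φ i (X.subtype x) • X.subtype (bX i)
        = X.subtype (∑ i, bX.repr x i • bX i) := by
          rw [map_sum]
          exact Finset.sum_congr rfl fun i _ => by rw [h1, map_smul]
      _ = X.subtype x := by rw [bX.sum_repr]
  have hYrec : ∀ y : Y, ∑ j, ψ j (Y.subtype y) • Y.subtype (bY j) = Y.subtype y := by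
    intro y
    have h1 : ∀ j, ψ j (Y.subtype y) = bY.repr y j := by
      intro j; simp [hψdef, hrYap, Module.Basis.coord_apply]
    calc ∑ j, ψ j (Y.subtype y) • Y.subtype (bY j)
        = Y.subtype (∑ j, bY.repr y j • bY j) := by
          rw [map_sum]
          exact Finset.sum_congr rfl fun j _ => by rw [h1, map_smul]
      _ = Y.subtype y := by rw [bY.sum_repr]
  -- the element u = (Δ ⊗ 1)(Δ c)
  set u : (C ⊗[k] C) ⊗[k] C := Δ.rTensor C (Δ c) with hu_def
  have hu2 : u ∈ LinearMap.range
      (map (LinearMap.id (R := k) (M := C ⊗[k] C)) Y.subtype) := by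
    refine ⟨map (Δ ∘ₗ X.subtype) LinearMap.id s, ?_⟩
    rw [hu_def, ← hs]
    clear hs
    induction s with
    | zero => simp
    | tmul x y => simp
    | add a b ha hb => simp only [map_add, ha, hb]
  have hu1 : u ∈ LinearMap.range
      (map (map X.subtype (LinearMap.id (R := k) (M := C)))
        (LinearMap.id (R := k) (M := C))) := by
    have h6 : u = (TensorProduct.assoc k C C C).symm (Δ.lTensor C (Δ c)) := by
      rw [hu_def, hΔ]; exact (Coalgebra.coassoc_symm_apply c).symm
    rw [h6, ← hs]
    clear hs hu2
    induction s with
    | zero => simp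
    | add a b ha hb => simp only [map_add]; exact add_mem ha hb
    | tmul x y =>
        simp only [map_tmul, LinearMap.lTensor_tmul, LinearMap.id_apply]
        generalize Δ (Y.subtype y) = t
        induction t with
        | zero => simp
        | add a b ha hb => simp only [tmul_add, map_add]; exact add_mem ha hb
        | tmul p q =>
            exact ⟨(x ⊗ₜ p) ⊗ₜ q, by simp [assoc_symm_tmul]⟩
  have hretr : (map rX (LinearMap.id (R := k) (M := C))) ∘ₗ
      (map X.subtype (LinearMap.id (R := k) (M := C))) = LinearMap.id := by
    rw [← TensorProduct.map_comp, hrX]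
    simp [TensorProduct.map_id]
  have hu : u ∈ LinearMap.range
      (map (map X.subtype (LinearMap.id (R := k) (M := C))) Y.subtype) :=
    mem_range_map_of_mem (map X.subtype (LinearMap.id (R := k) (M := C))) Y.subtype
      (map rX (LinearMap.id (R := k) (M := C))) hretr hu1 hu2
  obtain ⟨u₀, hu₀⟩ := hu
  -- the matrix coefficients and the candidate subcoalgebra
  set cc : Fin (Module.finrank k X) → Fin (Module.finrank k Y) → C :=
    fun i j => lc (φ i) C (rc (ψ j) (C ⊗[k] C) u) with hcc
  set D : Submodule k C :=
    Submodule.span k (Set.range fun p : Fin (Module.finrank k X) × Fin (Module.finrank k Y)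
      => cc p.1 p.2) with hD
  have hmemD : ∀ i j, cc i j ∈ D := fun i j => by
    rw [hD]; exact Submodule.subset_span ⟨(i, j), rfl⟩
  -- the expansion of u
  have hgen : ∀ v : (X ⊗[k] C) ⊗[k] Y,
      map (map X.subtype LinearMap.id) Y.subtype v =
      ∑ i, ∑ j, (X.subtype (bX i) ⊗ₜ[k]
        lc (φ i) C (rc (ψ j) (C ⊗[k] C)
          (map (map X.subtype LinearMap.id) Y.subtype v))) ⊗ₜ[k] Y.subtype (bY j) := by
    intro v
    induction v with
    | zero => simp
    | add a b ha hb =>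
        simp only [map_add, tmul_add, add_tmul, Finset.sum_add_distrib]
        rw [← ha, ← hb]
    | tmul w y =>
        induction w with
        | zero => simp
        | add a b ha hb =>
            simp only [add_tmul, map_add, tmul_add, Finset.sum_add_distrib]
            rw [← ha, ← hb]
        | tmul x m =>
            simp only [map_tmul, LinearMap.id_apply, rc_tmul, map_smul, lc_tmul]
            conv_lhs => rw [← hXrec x, ← hYrec y]
            simp [sum_tmul, tmul_sum, smul_tmul', tmul_smul, smul_smul,
              Finset.smul_sum, mul_comm]
            rw [Finset.sum_comm]
  have hexp : u = ∑ i, ∑ j,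
      (X.subtype (bX i) ⊗ₜ[k] cc i j) ⊗ₜ[k] Y.subtype (bY j) := by
    simp only [hcc]
    rw [← hu₀]
    exact hgen u₀
  -- c belongs to D
  have hrcu : rc (Coalgebra.counit (R := k)) (C ⊗[k] C) u = Δ c := by
    have hnat : ∀ t : C ⊗[k] C,
        rc (Coalgebra.counit (R := k)) (C ⊗[k] C) (Δ.rTensor C t)
          = Δ (rc (Coalgebra.counit (R := k)) C t) := by
      intro t
      induction t with
      | zero => simp
      | tmul a b => simp
      | add a b ha hb => simp [ha, hb]
    rw [hu_def, hnat]
    have h7 : rc (Coalgebra.counit (R := k)) C (Δ c) = c := by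
      simp [rc, hΔ]
    rw [h7]
  have hcin : c ∈ D := by
    have h8 : c = lc (Coalgebra.counit (R := k)) C
        (rc (Coalgebra.counit (R := k)) (C ⊗[k] C) u) := by
      rw [hrcu]; simp [lc, hΔ]
    rw [h8, hexp]
    simp only [map_sum, rc_tmul, map_smul, lc_tmul]
    exact Submodule.sum_mem _ fun i _ => Submodule.sum_mem _ fun j _ =>
      Submodule.smul_mem _ _ (Submodule.smul_mem _ _ (hmemD i j))
  -- first inclusion: Δ (cc i j) ∈ C ⊗ D
  have key1 : ∀ i j, Δ (cc i j) ∈ LinearMap.range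
      (map (LinearMap.id (R := k) (M := C)) D.subtype) := by
    intro i j
    set A : (C ⊗[k] (C ⊗[k] C)) ⊗[k] C := (Δ.lTensor C).rTensor C u with hA
    have eq1 : A = ∑ i', ∑ j',
        (X.subtype (bX i') ⊗ₜ[k] Δ (cc i' j')) ⊗ₜ[k] Y.subtype (bY j') := by
      rw [hA, hexp]
      simp [map_sum]
    have eq2 : A = ∑ i', ∑ j',
        (TensorProduct.assoc k C C C (Δ (X.subtype (bX i')) ⊗ₜ[k] cc i' j'))
          ⊗ₜ[k] Y.subtype (bY j') := by
      have h9 : A = (TensorProduct.assoc k C C C).toLinearMap.rTensor C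
          (((Δ.rTensor C).rTensor C) u) := by
        rw [hA, hu_def, ← LinearMap.comp_apply, ← LinearMap.rTensor_comp, ← hco,
          LinearMap.rTensor_comp, LinearMap.rTensor_comp]
        simp [LinearMap.comp_apply]
      rw [h9, hexp]
      simp [map_sum]
    have ext1 : lc (φ i) (C ⊗[k] C) (rc (ψ j) (C ⊗[k] (C ⊗[k] C)) A)
        = Δ (cc i j) := by
      rw [eq1]
      simp [map_sum, hψδ, hφδ, ite_smul, Finset.sum_ite_eq']
    have ext2 : lc (φ i) (C ⊗[k] C) (rc (ψ j) (C ⊗[k] (C ⊗[k] C)) A)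
        = ∑ i', lc (φ i) (C ⊗[k] C)
            (TensorProduct.assoc k C C C (Δ (X.subtype (bX i')) ⊗ₜ[k] cc i' j)) := by
      rw [eq2]
      simp [map_sum, hψδ, ite_smul, Finset.sum_ite_eq']
    rw [ext1.symm.trans ext2]
    exact Submodule.sum_mem _ fun i' _ => lc_assoc_mem _ _ _ (hmemD i' j)
  -- second inclusion: Δ (cc i j) ∈ D ⊗ C
  have key2 : ∀ i j, Δ (cc i j) ∈ LinearMap.range
      (map D.subtype (LinearMap.id (R := k) (M := C))) := by
    intro i j
    have hwexp : Δ.lTensor C (Δ c) = ∑ i', ∑ j',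
        X.subtype (bX i') ⊗ₜ[k] (cc i' j' ⊗ₜ[k] Y.subtype (bY j')) := by
      have h6 : (TensorProduct.assoc k C C C) u = Δ.lTensor C (Δ c) := by
        rw [hu_def, hΔ]; exact Coalgebra.coassoc_apply c
      rw [← h6, hexp]
      simp [map_sum]
    set B : C ⊗[k] ((C ⊗[k] C) ⊗[k] C) := (Δ.rTensor C).lTensor C (Δ.lTensor C (Δ c))
      with hB
    have eq1 : B = ∑ i', ∑ j',
        X.subtype (bX i') ⊗ₜ[k] (Δ (cc i' j') ⊗ₜ[k] Y.subtype (bY j')) := by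
      rw [hB, hwexp]
      simp [map_sum]
    have eq2 : B = ∑ i', ∑ j',
        X.subtype (bX i') ⊗ₜ[k]
          ((TensorProduct.assoc k C C C).symm (cc i' j' ⊗ₜ[k] Δ (Y.subtype (bY j')))) := by
      have h9 : B = (TensorProduct.assoc k C C C).symm.toLinearMap.lTensor C
          (((Δ.lTensor C).lTensor C) (Δ.lTensor C (Δ c))) := by
        rw [hB, ← LinearMap.comp_apply, ← LinearMap.lTensor_comp, ← hco_symm,
          LinearMap.lTensor_comp, LinearMap.lTensor_comp]
        simp [LinearMap.comp_apply]
      rw [h9, hwexp]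
      simp [map_sum]
    have ext1 : rc (ψ j) (C ⊗[k] C) (lc (φ i) ((C ⊗[k] C) ⊗[k] C) B)
        = Δ (cc i j) := by
      rw [eq1]
      simp [map_sum, hψδ, hφδ, ite_smul, Finset.sum_ite_eq']
    have ext2 : rc (ψ j) (C ⊗[k] C) (lc (φ i) ((C ⊗[k] C) ⊗[k] C) B)
        = ∑ j', rc (ψ j) (C ⊗[k] C)
            ((TensorProduct.assoc k C C C).symm (cc i j' ⊗ₜ[k] Δ (Y.subtype (bY j')))) := by
      rw [eq2]
      simp [map_sum, hφδ, ite_smul, Finset.sum_ite_eq']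
    rw [ext1.symm.trans ext2]
    exact Submodule.sum_mem _ fun j' _ => rc_assoc_symm_mem _ _ _ (hmemD i j')
  -- combine
  obtain ⟨rD, hrD⟩ := exists_retraction D
  have key : ∀ i j, Δ (cc i j) ∈ LinearMap.range (map D.subtype D.subtype) :=
    fun i j => mem_range_map_of_mem D.subtype D.subtype rD hrD (key2 i j) (key1 i j)
  refine ⟨D, ?_, hcin, ?_⟩
  · rw [hD]; exact FiniteDimensional.span_of_finite k (Set.finite_range _)
  · intro x hx
    have hle : D ≤ Submodule.comap Δ (LinearMap.range (map D.subtype D.subtype)) := by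
      rw [hD]
      refine Submodule.span_le.2 ?_
      rintro z ⟨⟨i, j⟩, rfl⟩
      exact key i j
    exact hle hx
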